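/- arXiv:2401.00419 — 8 statements merged into one kernel-verified Lean document; each statement's English description precedes it below -/
import Mathlib

section
/- Let p0 : {1,…,K} → {1,…,P} be a choice of optimal configurations, i.e. for every k ∈ {1,…,K} and every p ∈ {1,…,P} one has c_{p0(k),k} · p ≥ c_{p,k} · p0(k). Then for every feasible schedule x there exists a feasible schedule x' such that (i) x' has the same load as x at every period t (H'_t = H_t for all 1 ≤ t ≤ T), and (ii) for every k ∈ {1,…,K}, every t ∈ {1,…,T} and every p ∈ {1,…,P} with p ≠ p0(k), one has x'_{p,k,t} ≤ p0(k). -/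
/-!
Fix a job type `k` and a period `t`. Every `p₀` copies of a non-optimal configuration `q` have
the same load as `q` copies of the optimal configuration `p₀`, and by optimality
(`c q * p₀ ≤ c p₀ * q`) cover no more demand than those. Trading them in, i.e. keeping only
`x q k t % p₀` copies of each `q ≠ p₀` and adding `q * (x q k t / p₀)` copies of `p₀`,
therefore preserves the load, keeps the schedule feasible, and leaves fewer than `p₀`
copies of every non-optimal configuration.
-/

open Finset

def consolidate (s : Finset ℕ) (p₀ : ℕ) (y : ℕ → ℕ) (p : ℕ) : ℕ :=
  if p = p₀ then y p₀ + ∑ q ∈ s.erase p₀, q * (y q / p₀) else y p % p₀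

section consolidate

variable {s : Finset ℕ} {p₀ : ℕ} {y : ℕ → ℕ}

theorem consolidate_lt_of_ne {p : ℕ} (hp₀ : 0 < p₀) (hp : p ≠ p₀) :
    consolidate s p₀ y p < p₀ := by
  simpa only [consolidate, if_neg hp] using Nat.mod_lt _ hp₀

theorem sum_mul_consolidate (h₀ : p₀ ∈ s) (f : ℕ → ℕ) :
    ∑ p ∈ s, f p * consolidate s p₀ y p =
      f p₀ * y p₀ + ∑ q ∈ s.erase p₀, (f p₀ * (q * (y q / p₀)) + f q * (y q % p₀)) := by
  rw [← add_sum_erase _ _ h₀, sum_add_distrib, ← mul_sum, ← add_assoc, ← mul_add]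
  congr 1
  · rw [consolidate, if_pos rfl]
  · refine sum_congr rfl fun q hq => ?_
    simp only [consolidate, if_neg (ne_of_mem_erase hq)]

theorem sum_mul_consolidate_self (h₀ : p₀ ∈ s) :
    ∑ p ∈ s, p * consolidate s p₀ y p = ∑ p ∈ s, p * y p := by
  rw [sum_mul_consolidate h₀, ← add_sum_erase _ _ h₀]
  congr 1
  refine sum_congr rfl fun q _ => ?_
  calc p₀ * (q * (y q / p₀)) + q * (y q % p₀)
      = q * (p₀ * (y q / p₀) + y q % p₀) := by ring
    _ = q * y q := by rw [Nat.div_add_mod]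

theorem sum_mul_le_sum_mul_consolidate (h₀ : p₀ ∈ s) (c : ℕ → ℕ)
    (hopt : ∀ q ∈ s, c q * p₀ ≤ c p₀ * q) :
    ∑ p ∈ s, c p * y p ≤ ∑ p ∈ s, c p * consolidate s p₀ y p := by
  rw [sum_mul_consolidate h₀, ← add_sum_erase _ _ h₀]
  gcongr with q hq
  calc c q * y q
      = c q * p₀ * (y q / p₀) + c q * (y q % p₀) := by
        rw [mul_assoc, ← mul_add, Nat.div_add_mod]
    _ ≤ c p₀ * q * (y q / p₀) + c q * (y q % p₀) := by
        gcongr ?_ * _ + _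
        exact hopt q (mem_of_mem_erase hq)
    _ = c p₀ * (q * (y q / p₀)) + c q * (y q % p₀) := by ring

end consolidate

theorem multibot_optimal_configurations_general
    (K P T : ℕ)
    (c : ℕ → ℕ → ℕ) (d : ℕ → ℕ)
    (p0 : ℕ → ℕ)
    (hp0mem : ∀ k ∈ Finset.Icc 1 K, p0 k ∈ Finset.Icc 1 P)
    (hp0opt : ∀ k ∈ Finset.Icc 1 K, ∀ p ∈ Finset.Icc 1 P,
      c p k * p0 k ≤ c (p0 k) k * p)
    (x : ℕ → ℕ → ℕ → ℕ)
    (hfeas : ∀ k ∈ Finset.Icc 1 K,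
      d k ≤ ∑ t ∈ Finset.Icc 1 T, ∑ p ∈ Finset.Icc 1 P, c p k * x p k t) :
    ∃ x' : ℕ → ℕ → ℕ → ℕ,
      (∀ k ∈ Finset.Icc 1 K,
        d k ≤ ∑ t ∈ Finset.Icc 1 T, ∑ p ∈ Finset.Icc 1 P, c p k * x' p k t) ∧
      (∀ t ∈ Finset.Icc 1 T,
        ∑ k ∈ Finset.Icc 1 K, ∑ p ∈ Finset.Icc 1 P, p * x' p k t
          = ∑ k ∈ Finset.Icc 1 K, ∑ p ∈ Finset.Icc 1 P, p * x p k t) ∧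
      (∀ k ∈ Finset.Icc 1 K, ∀ t ∈ Finset.Icc 1 T, ∀ p ∈ Finset.Icc 1 P,
        p ≠ p0 k → x' p k t ≤ p0 k) := by
  refine ⟨fun p k t => consolidate (Icc 1 P) (p0 k) (fun q => x q k t) p, ?_, ?_, ?_⟩
  · intro k hk
    refine (hfeas k hk).trans (sum_le_sum fun t _ => ?_)
    exact sum_mul_le_sum_mul_consolidate (hp0mem k hk) (c · k) (hp0opt k hk)
  · intro t _
    exact sum_congr rfl fun k hk => sum_mul_consolidate_self (hp0mem k hk)
  · intro k hk t _ p _ hp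
    have hpos : 0 < p0 k := (mem_Icc.mp (hp0mem k hk)).1
    exact (consolidate_lt_of_ne hpos hp).le

/-- Given optimal configurations `p0`, every feasible schedule can be
transformed into a feasible schedule with the same load at every period and with
`x' p k t ≤ p0 k` for every non-optimal configuration `p ≠ p0 k`. -/
theorem multibot_optimal_configurations
    (K P T : ℕ) (hK : 1 ≤ K) (hP : 1 ≤ P) (hT : 1 ≤ T)
    (c : ℕ → ℕ → ℕ) (d : ℕ → ℕ)
    (p0 : ℕ → ℕ)
    (hp0mem : ∀ k ∈ Finset.Icc 1 K, p0 k ∈ Finset.Icc 1 P)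
    (hp0opt : ∀ k ∈ Finset.Icc 1 K, ∀ p ∈ Finset.Icc 1 P,
      c p k * p0 k ≤ c (p0 k) k * p)
    (x : ℕ → ℕ → ℕ → ℕ)
    (hfeas : ∀ k ∈ Finset.Icc 1 K,
      d k ≤ ∑ t ∈ Finset.Icc 1 T, ∑ p ∈ Finset.Icc 1 P, c p k * x p k t) :
    ∃ x' : ℕ → ℕ → ℕ → ℕ,
      (∀ k ∈ Finset.Icc 1 K,
        d k ≤ ∑ t ∈ Finset.Icc 1 T, ∑ p ∈ Finset.Icc 1 P, c p k * x' p k t) ∧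
      (∀ t ∈ Finset.Icc 1 T,
        ∑ k ∈ Finset.Icc 1 K, ∑ p ∈ Finset.Icc 1 P, p * x' p k t
          = ∑ k ∈ Finset.Icc 1 K, ∑ p ∈ Finset.Icc 1 P, p * x p k t) ∧
      (∀ k ∈ Finset.Icc 1 K, ∀ t ∈ Finset.Icc 1 T, ∀ p ∈ Finset.Icc 1 P,
        p ≠ p0 k → x' p k t ≤ p0 k) :=
  multibot_optimal_configurations_general K P T c d p0 hp0mem hp0opt x hfeas
end

section
/- Let λ ≥ 1 be an integer and let x be a feasible schedule whose load at every period t satisfies H_t ≤ λ. Then the packing π associated with x (π_{p,k} = ∑_{t=1}^T x_{p,k,t}) satisfies: (i) π satisfies all demands, i.e. ∑_{p=1}^P c_{p,k} · π_{p,k} ≥ d_k for every k; (ii) vol(π) ≤ λ · T; (iii) π_{p,k} = 0 whenever p > λ; and (iv) the doubled λ-scale of π is at most 2T, i.e. 2 · ∑_{k=1}^K ∑_{p : 3p > 2λ} π_{p,k} + ∑_{k=1}^K ∑_{p : λ < 3p ≤ 2λ} π_{p,k} ≤ 2T. -/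
/-!
Summing the schedule over the periods turns demands and volume into sums of per-period
quantities, so (i) and (ii) are exchanges of summation. A configuration `p > L` cannot
occur in any period, since it alone would exceed the load bound `L`. For (iv), the doubled scale
is additive too, and within one period it is at most `2`: a big configuration has
`3p ≥ 2L + 1` and a medium one `3p ≥ L + 1`, so `B` big and `M` medium configurations give
`(2L + 1) B + (L + 1) M ≤ 3L`, which rules out `2B + M ≥ 3`.
-/

open Finset

variable {κ ι : Type*}

def packingVolume (J : Finset κ) (S : Finset ℕ) (π : ℕ → κ → ℕ) : ℕ :=
  ∑ k ∈ J, ∑ p ∈ S, p * π p k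

def doubledScale (L : ℕ) (J : Finset κ) (S : Finset ℕ) (π : ℕ → κ → ℕ) : ℕ :=
  2 * ∑ k ∈ J, ∑ p ∈ S.filter (fun p => 2 * L < 3 * p), π p k
    + ∑ k ∈ J, ∑ p ∈ S.filter (fun p => L < 3 * p ∧ 3 * p ≤ 2 * L), π p k

def associatedPacking (T : Finset ι) (x : ℕ → κ → ι → ℕ) (p : ℕ) (k : κ) : ℕ :=
  ∑ t ∈ T, x p k t

theorem Finset.sum_sum_sum_comm {α β γ M : Type*} [AddCommMonoid M]
    (A : Finset α) (B : Finset β) (C : Finset γ) (f : α → β → γ → M) :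
    ∑ a ∈ A, ∑ b ∈ B, ∑ c ∈ C, f a b c = ∑ c ∈ C, ∑ a ∈ A, ∑ b ∈ B, f a b c :=
  (sum_congr rfl fun _ _ => sum_comm).trans sum_comm

section Packing

variable (L : ℕ) (J : Finset κ) (S : Finset ℕ)

theorem packingVolume_associatedPacking (T : Finset ι) (x : ℕ → κ → ι → ℕ) :
    packingVolume J S (associatedPacking T x)
      = ∑ t ∈ T, packingVolume J S (fun p k => x p k t) := by
  simp only [packingVolume, associatedPacking, mul_sum]
  exact sum_sum_sum_comm _ _ _ _

theorem doubledScale_associatedPacking (T : Finset ι) (x : ℕ → κ → ι → ℕ) :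
    doubledScale L J S (associatedPacking T x)
      = ∑ t ∈ T, doubledScale L J S (fun p k => x p k t) := by
  simp only [doubledScale, associatedPacking]
  rw [sum_sum_sum_comm, sum_sum_sum_comm J, mul_sum, ← sum_add_distrib]

theorem scale_weights_le_three_mul (p y : ℕ) :
    (2 * L + 1) * (if 2 * L < 3 * p then y else 0)
      + (L + 1) * (if L < 3 * p ∧ 3 * p ≤ 2 * L then y else 0) ≤ 3 * (p * y) := by
  split_ifs <;> nlinarith

theorem doubledScale_le_two {π : ℕ → κ → ℕ} (h : packingVolume J S π ≤ L) :
    doubledScale L J S π ≤ 2 := by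
  set B := ∑ k ∈ J, ∑ p ∈ S.filter (fun p => 2 * L < 3 * p), π p k
  set M := ∑ k ∈ J, ∑ p ∈ S.filter (fun p => L < 3 * p ∧ 3 * p ≤ 2 * L), π p k
  have weighted : (2 * L + 1) * B + (L + 1) * M ≤ 3 * L :=
    calc (2 * L + 1) * B + (L + 1) * M
        = ∑ k ∈ J, ∑ p ∈ S, ((2 * L + 1) * (if 2 * L < 3 * p then π p k else 0)
            + (L + 1) * (if L < 3 * p ∧ 3 * p ≤ 2 * L then π p k else 0)) := by
          simp only [B, M, sum_filter, mul_sum, sum_add_distrib]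
      _ ≤ ∑ k ∈ J, ∑ p ∈ S, 3 * (p * π p k) :=
          sum_le_sum fun k _ => sum_le_sum fun p _ => scale_weights_le_three_mul L p (π p k)
      _ = 3 * packingVolume J S π := by simp only [packingVolume, mul_sum]
      _ ≤ 3 * L := Nat.mul_le_mul_left 3 h
  change 2 * B + M ≤ 2
  nlinarith

theorem associatedPacking_eq_zero_of_lt {T : Finset ι} {x : ℕ → κ → ι → ℕ}
    (hload : ∀ t ∈ T, packingVolume J S (fun p k => x p k t) ≤ L)
    {k : κ} (hk : k ∈ J) {p : ℕ} (hp : p ∈ S) (hLp : L < p) :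
    associatedPacking T x p k = 0 := by
  refine sum_eq_zero fun t ht => ?_
  have hpx : p * x p k t ≤ L :=
    calc p * x p k t ≤ ∑ p ∈ S, p * x p k t :=
          single_le_sum (f := fun p => p * x p k t) (fun _ _ => Nat.zero_le _) hp
      _ ≤ packingVolume J S (fun p k => x p k t) :=
          single_le_sum (f := fun k => ∑ p ∈ S, p * x p k t) (fun _ _ => Nat.zero_le _) hk
      _ ≤ L := hload t ht
  by_contra hx
  have := Nat.le_mul_of_pos_right p (Nat.pos_of_ne_zero hx)
  omega

end Packing

theorem associated_packing_properties_general
    (K P T : ℕ)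
    (c : ℕ → ℕ → ℕ) (d : ℕ → ℕ)
    (L : ℕ)
    (x : ℕ → ℕ → ℕ → ℕ)
    (hfeas : ∀ k ∈ Finset.Icc 1 K,
      d k ≤ ∑ t ∈ Finset.Icc 1 T, ∑ p ∈ Finset.Icc 1 P, c p k * x p k t)
    (hload : ∀ t ∈ Finset.Icc 1 T,
      ∑ k ∈ Finset.Icc 1 K, ∑ p ∈ Finset.Icc 1 P, p * x p k t ≤ L) :
    (∀ k ∈ Finset.Icc 1 K,
      d k ≤ ∑ p ∈ Finset.Icc 1 P, c p k * (∑ t ∈ Finset.Icc 1 T, x p k t)) ∧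
    (∑ k ∈ Finset.Icc 1 K, ∑ p ∈ Finset.Icc 1 P,
        p * (∑ t ∈ Finset.Icc 1 T, x p k t) ≤ L * T) ∧
    (∀ k ∈ Finset.Icc 1 K, ∀ p ∈ Finset.Icc 1 P, L < p →
      (∑ t ∈ Finset.Icc 1 T, x p k t) = 0) ∧
    (2 * (∑ k ∈ Finset.Icc 1 K, ∑ p ∈ (Finset.Icc 1 P).filter (fun p => 2 * L < 3 * p),
            (∑ t ∈ Finset.Icc 1 T, x p k t))
      + (∑ k ∈ Finset.Icc 1 K,
          ∑ p ∈ (Finset.Icc 1 P).filter (fun p => L < 3 * p ∧ 3 * p ≤ 2 * L),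
            (∑ t ∈ Finset.Icc 1 T, x p k t))
      ≤ 2 * T) := by
  have volume_le : packingVolume (Icc 1 K) (Icc 1 P) (associatedPacking (Icc 1 T) x) ≤ L * T :=
    calc _ = _ := packingVolume_associatedPacking _ _ _ _
      _ ≤ ∑ _ ∈ Icc 1 T, L := sum_le_sum hload
      _ = L * T := by simp [mul_comm]
  have scale_le : doubledScale L (Icc 1 K) (Icc 1 P) (associatedPacking (Icc 1 T) x) ≤ 2 * T :=
    calc _ = _ := doubledScale_associatedPacking _ _ _ _ _
      _ ≤ ∑ _ ∈ Icc 1 T, 2 := sum_le_sum fun t ht => doubledScale_le_two _ _ _ (hload t ht)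
      _ = 2 * T := by simp [mul_comm]
  refine ⟨fun k hk => (hfeas k hk).trans_eq ?_, volume_le,
    fun k hk p hp => associatedPacking_eq_zero_of_lt L _ _ hload hk hp, scale_le⟩
  rw [sum_comm]
  simp only [mul_sum]

/-- The packing associated with a feasible schedule whose loads are all
at most `L` satisfies the demands, has volume at most `L * T`, uses no configuration
larger than `L`, and has doubled `L`-scale at most `2 * T`. -/
theorem associated_packing_properties
    (K P T : ℕ) (hK : 1 ≤ K) (hP : 1 ≤ P) (hT : 1 ≤ T)
    (c : ℕ → ℕ → ℕ) (d : ℕ → ℕ)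
    (L : ℕ) (hL : 1 ≤ L)
    (x : ℕ → ℕ → ℕ → ℕ)
    (hfeas : ∀ k ∈ Finset.Icc 1 K,
      d k ≤ ∑ t ∈ Finset.Icc 1 T, ∑ p ∈ Finset.Icc 1 P, c p k * x p k t)
    (hload : ∀ t ∈ Finset.Icc 1 T,
      ∑ k ∈ Finset.Icc 1 K, ∑ p ∈ Finset.Icc 1 P, p * x p k t ≤ L) :
    (∀ k ∈ Finset.Icc 1 K,
      d k ≤ ∑ p ∈ Finset.Icc 1 P, c p k * (∑ t ∈ Finset.Icc 1 T, x p k t)) ∧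
    (∑ k ∈ Finset.Icc 1 K, ∑ p ∈ Finset.Icc 1 P,
        p * (∑ t ∈ Finset.Icc 1 T, x p k t) ≤ L * T) ∧
    (∀ k ∈ Finset.Icc 1 K, ∀ p ∈ Finset.Icc 1 P, L < p →
      (∑ t ∈ Finset.Icc 1 T, x p k t) = 0) ∧
    (2 * (∑ k ∈ Finset.Icc 1 K, ∑ p ∈ (Finset.Icc 1 P).filter (fun p => 2 * L < 3 * p),
            (∑ t ∈ Finset.Icc 1 T, x p k t))
      + (∑ k ∈ Finset.Icc 1 K,
          ∑ p ∈ (Finset.Icc 1 P).filter (fun p => L < 3 * p ∧ 3 * p ≤ 2 * L),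
            (∑ t ∈ Finset.Icc 1 T, x p k t))
      ≤ 2 * T) :=
  associated_packing_properties_general K P T c d L x hfeas hload
end

section
/- Let T ≥ 1 and λ ≥ 0 be integers, let I be a finite set of items with sizes s_i ∈ ℕ satisfying 3 · s_i ≤ λ for every i ∈ I, and suppose ∑_{i ∈ I} s_i ≤ T · λ. Then there exists an assignment f : I → {1,…,T} of the items to T boxes such that for every box t ∈ {1,…,T}, 3 · ∑_{i : f(i) = t} s_i ≤ 4λ. -/
/-!
Greedy list scheduling. Insert the items one at a time, each into a box whose current load is
at most the average bound `λ`; such a box exists by pigeonhole, since the load placed so far is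
at most `T λ`. Adding an item of size at most `λ / 3` to that box leaves it at most `4 λ / 3`,
and all other boxes are unchanged.
-/

open Finset

namespace Finset

variable {ι β M : Type*} [DecidableEq ι] [DecidableEq β]

theorem sum_filter_insert_update {A : Finset ι} {a : ι} (ha : a ∉ A) [AddCommMonoid M]
    (f : ι → β) (b₀ b : β) (s : ι → M) :
    ∑ i ∈ insert a A with Function.update f a b₀ i = b, s i =
      (if b₀ = b then s a else 0) + ∑ i ∈ A with f i = b, s i := by
  have hA : ∑ i ∈ A with Function.update f a b₀ i = b, s i = ∑ i ∈ A with f i = b, s i :=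
    sum_congr (filter_congr fun i hi => by rw [Function.update_of_ne (ne_of_mem_of_not_mem hi ha)])
      fun _ _ => rfl
  split_ifs with h
  · rw [filter_insert, if_pos (by simpa using h), sum_insert (by simp [ha]), hA]
  · rw [filter_insert, if_neg (by simpa using h), hA, zero_add]

variable [AddCommMonoid M] [LinearOrder M] [IsOrderedCancelAddMonoid M] [CanonicallyOrderedAdd M]

theorem exists_forall_sum_fiber_le_add_of_sum_le_nsmul {A : Finset ι} {B : Finset β}
    (hB : B.Nonempty) {s : ι → M} {c δ : M} (hs : ∀ i ∈ A, s i ≤ δ) (hA : ∑ i ∈ A, s i ≤ #B • c) :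
    ∃ f : ι → β, (∀ i, f i ∈ B) ∧ ∀ b ∈ B, ∑ i ∈ A with f i = b, s i ≤ c + δ := by
  induction A using Finset.induction_on with
  | empty =>
    obtain ⟨b₀, hb₀⟩ := hB
    exact ⟨fun _ => b₀, fun _ => hb₀, fun b _ => by simp⟩
  | insert a A ha ih =>
    rw [sum_insert ha] at hA
    obtain ⟨f, hfB, hf⟩ := ih (fun i hi => hs i (mem_insert_of_mem hi))
      (le_trans le_add_self hA)
    obtain ⟨b₀, hb₀B, hb₀⟩ := exists_sum_fiber_le_of_maps_to_of_sum_le_nsmul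
      (fun i _ => hfB i) hB (le_trans le_add_self hA)
    refine ⟨Function.update f a b₀, fun i => ?_, fun b hb => ?_⟩
    · rcases eq_or_ne i a with rfl | hi
      · simpa using hb₀B
      · simpa [Function.update_of_ne hi] using hfB i
    · rw [sum_filter_insert_update ha]
      split_ifs with h
      · subst h
        rw [add_comm c]
        exact add_le_add (hs a (mem_insert_self a A)) hb₀
      · rw [zero_add]
        exact hf b hb

end Finset

/-- Small items (each of size at most `L/3`) of total size at most `T * L`
can be assigned to `T` boxes so that every box load is at most `4L/3`. -/
theorem small_items_assignment
    (T L : ℕ) (hT : 1 ≤ T)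
    (I : Type) [Fintype I] (s : I → ℕ)
    (hsmall : ∀ i : I, 3 * s i ≤ L)
    (hvol : ∑ i : I, s i ≤ T * L) :
    ∃ f : I → ℕ,
      (∀ i : I, f i ∈ Finset.Icc 1 T) ∧
      (∀ t ∈ Finset.Icc 1 T,
        3 * (∑ i ∈ Finset.univ.filter (fun i => f i = t), s i) ≤ 4 * L) := by
  classical
  have hvol3 : ∑ i, 3 * s i ≤ #(Icc 1 T) • (3 * L) := by
    rw [← mul_sum, Nat.card_Icc, Nat.add_sub_cancel, smul_eq_mul]
    linarith
  obtain ⟨f, hfB, hf⟩ := exists_forall_sum_fiber_le_add_of_sum_le_nsmul ⟨1, by simpa using hT⟩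
    (fun i _ => hsmall i) hvol3
  refine ⟨f, hfB, fun t ht => ?_⟩
  rw [mul_sum]
  linarith [hf t ht]
end

section
/- Let H be an integer with 3P ≤ H, and let π be a packing whose volume satisfies vol(π) ≤ T · H. Then there exists a schedule y such that (i) ∑_{t=1}^T y_{p,k,t} = π_{p,k} for all p ∈ {1,…,P} and k ∈ {1,…,K} (so y processes exactly the configurations of π, and in particular y is feasible whenever π satisfies all demands), and (ii) the load of y at every period t satisfies 3 · H_t ≤ 4H. -/
/-!
Lay the copies of the configurations of `π` end to end on the line `[0, vol π)`, block after
block, and give period `t` every copy that starts in `[(t - 1) H, t H)`. Since `vol π ≤ T H`, each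
copy starts in one of the periods `1, …, T`. The copies starting before `x` have total size between
`min (vol π) x` and `x + P` (the last of them sticks out past `x` by less than `P`), so each
period receives load at most `H + P ≤ 4H/3`.
-/

open Finset

/-- The `j`-th of `n` copies of width `w` laid end to end from `a` occupies
`[a + j * w, a + (j + 1) * w)`. -/
def numStartsBefore (a w n x : ℕ) : ℕ := #{j ∈ range n | a + j * w < x}

section Copies
variable {a w n x : ℕ}

lemma numStartsBefore_succ (a w n x : ℕ) :
    numStartsBefore a w (n + 1) x =
      numStartsBefore a w n x + if a + n * w < x then 1 else 0 := by
  simp only [numStartsBefore, card_filter, sum_range_succ]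

lemma numStartsBefore_le : numStartsBefore a w n x ≤ n :=
  (card_filter_le _ _).trans (card_range n).le

lemma numStartsBefore_mono (a w n : ℕ) : Monotone (numStartsBefore a w n) :=
  fun _ _ hxy => card_le_card <| monotone_filter_right _ fun _ _ h => h.trans_le hxy

lemma numStartsBefore_of_le_start (h : x ≤ a) : numStartsBefore a w n x = 0 := by
  simp only [numStartsBefore, card_eq_zero, filter_eq_empty_iff]
  omega

lemma numStartsBefore_of_end_le (hw : 0 < w) (h : a + n * w ≤ x) :
    numStartsBefore a w n x = n := by
  rw [numStartsBefore, filter_true_of_mem, card_range]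
  intro j hj
  have : j * w < n * w := Nat.mul_lt_mul_of_pos_right (mem_range.mp hj) hw
  omega

lemma add_mul_numStartsBefore_lt (h : a < x) : a + numStartsBefore a w n x * w < x + w := by
  induction n with
  | zero => simpa [numStartsBefore] using Nat.lt_add_right w h
  | succ n ih =>
    rw [numStartsBefore_succ]
    split_ifs with hn
    · have : numStartsBefore a w n x * w ≤ n * w := Nat.mul_le_mul_right w numStartsBefore_le
      rw [add_mul]; omega
    · simpa using ih

lemma min_le_add_mul_numStartsBefore : min (a + n * w) x ≤ a + numStartsBefore a w n x * w := by
  induction n with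
  | zero => simp [numStartsBefore]
  | succ n ih =>
    rw [numStartsBefore_succ]
    split_ifs with hn
    · rw [add_mul, add_mul]; omega
    · simp only [add_zero]; rw [add_mul]; omega

end Copies

lemma sum_Icc_tsub_of_monotone {f : ℕ → ℕ} (hf : Monotone f) (T : ℕ) :
    ∑ t ∈ Icc 1 T, (f t - f (t - 1)) = f T - f 0 := by
  induction T with
  | zero => simp
  | succ T ih =>
    rw [sum_Icc_succ_top (by omega), ih, Nat.add_sub_cancel]
    have := hf (Nat.zero_le T)
    have := hf (Nat.le_add_right T 1)
    omega

section Blocks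
variable {ι : Type*} [LinearOrder ι] (w n : ι → ℕ)

def blockStart (s : Finset ι) (i : ι) : ℕ := ∑ j ∈ s with j < i, w j * n j

def volumeStartedBefore (s : Finset ι) (x : ℕ) : ℕ :=
  ∑ i ∈ s, numStartsBefore (blockStart w n s i) (w i) (n i) x * w i

def periodCount (s : Finset ι) (H : ℕ) (i : ι) (t : ℕ) : ℕ :=
  numStartsBefore (blockStart w n s i) (w i) (n i) (t * H) -
    numStartsBefore (blockStart w n s i) (w i) (n i) ((t - 1) * H)

variable {w n}

lemma blockStart_add_le {s : Finset ι} {i : ι} (hi : i ∈ s) :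
    blockStart w n s i + w i * n i ≤ ∑ j ∈ s, w j * n j := by
  rw [blockStart, ← sum_filter_add_sum_filter_not s (· < i)]
  gcongr
  exact single_le_sum (f := fun j => w j * n j) (fun _ _ => Nat.zero_le _)
    (mem_filter.mpr ⟨hi, lt_irrefl i⟩)

lemma volumeStartedBefore_insert_max {s : Finset ι} {a : ι} (ha : ∀ i ∈ s, i < a) (x : ℕ) :
    volumeStartedBefore w n (insert a s) x = volumeStartedBefore w n s x +
      numStartsBefore (∑ i ∈ s, w i * n i) (w a) (n a) x * w a := by
  have has : a ∉ s := fun h => lt_irrefl a (ha a h)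
  have start_old : ∀ i ∈ s, blockStart w n (insert a s) i = blockStart w n s i := fun i hi => by
    rw [blockStart, filter_insert, if_neg (ha i hi).not_gt, blockStart]
  have start_new : blockStart w n (insert a s) a = ∑ i ∈ s, w i * n i := by
    rw [blockStart, filter_insert, if_neg (lt_irrefl a), filter_true_of_mem ha]
  rw [volumeStartedBefore, sum_insert has, start_new, add_comm, volumeStartedBefore]
  congr 1
  exact sum_congr rfl fun i hi => by rw [start_old i hi]

lemma min_le_volumeStartedBefore (s : Finset ι) (x : ℕ) :
    min (∑ i ∈ s, w i * n i) x ≤ volumeStartedBefore w n s x := by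
  classical
  induction s using Finset.induction_on_max with
  | empty => simp
  | insert a s ha ih =>
    have hnew :=
      min_le_add_mul_numStartsBefore (a := ∑ i ∈ s, w i * n i) (w := w a) (n := n a) (x := x)
    rw [volumeStartedBefore_insert_max ha, sum_insert fun h => lt_irrefl a (ha a h)]
    rw [mul_comm (n a)] at hnew
    omega

lemma volumeStartedBefore_le {s : Finset ι} {P : ℕ} (hw : ∀ i ∈ s, w i ≤ P) (x : ℕ) :
    volumeStartedBefore w n s x ≤ min (∑ i ∈ s, w i * n i) (x + P) := by
  classical
  induction s using Finset.induction_on_max with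
  | empty => simp [volumeStartedBefore]
  | insert a s ha ih =>
    rw [volumeStartedBefore_insert_max ha, sum_insert fun h => lt_irrefl a (ha a h)]
    have ih := ih fun i hi => hw i (mem_insert_of_mem hi)
    have hwa := hw a (mem_insert_self a s)
    have hcount : numStartsBefore (∑ i ∈ s, w i * n i) (w a) (n a) x * w a ≤ w a * n a :=
      mul_comm (w a) _ ▸ Nat.mul_le_mul_left _ numStartsBefore_le
    rcases le_or_gt x (∑ i ∈ s, w i * n i) with hx | hx
    · rw [numStartsBefore_of_le_start hx]
      omega
    · have := add_mul_numStartsBefore_lt (w := w a) (n := n a) hx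
      omega

lemma volumeStartedBefore_sub_le {s : Finset ι} {P : ℕ} (hw : ∀ i ∈ s, w i ≤ P) (x y : ℕ) :
    volumeStartedBefore w n s (y + x) - volumeStartedBefore w n s y ≤ x + P := by
  have := volumeStartedBefore_le (n := n) hw (y + x)
  have := min_le_volumeStartedBefore (w := w) (n := n) s y
  omega

lemma sum_periodCount {s : Finset ι} {i : ι} {T H : ℕ} (hi : i ∈ s) (hw : 0 < w i)
    (hvol : ∑ j ∈ s, w j * n j ≤ T * H) :
    ∑ t ∈ Icc 1 T, periodCount w n s H i t = n i := by
  have hend : blockStart w n s i + n i * w i ≤ T * H := by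
    rw [mul_comm]; exact (blockStart_add_le hi).trans hvol
  unfold periodCount
  rw [sum_Icc_tsub_of_monotone (f := fun t => numStartsBefore _ _ _ (t * H))
      ((numStartsBefore_mono _ _ _).comp fun _ _ h => Nat.mul_le_mul_right H h),
    numStartsBefore_of_end_le hw hend, numStartsBefore_of_le_start (by simp), Nat.sub_zero]

lemma sum_periodCount_mul_le {s : Finset ι} {P : ℕ} (hw : ∀ i ∈ s, w i ≤ P) (H : ℕ) {t : ℕ}
    (ht : 1 ≤ t) : ∑ i ∈ s, w i * periodCount w n s H i t ≤ H + P := by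
  obtain ⟨u, rfl⟩ : ∃ u, t = u + 1 := ⟨t - 1, by omega⟩
  have hload : ∑ i ∈ s, w i * periodCount w n s H i (u + 1) =
      volumeStartedBefore w n s (u * H + H) - volumeStartedBefore w n s (u * H) := by
    rw [volumeStartedBefore, volumeStartedBefore, ← sum_tsub_distrib]
    · simp only [periodCount, Nat.add_sub_cancel, add_one_mul, mul_comm (w _), tsub_mul]
    · exact fun i _ =>
        Nat.mul_le_mul_right _ (numStartsBefore_mono _ _ _ (Nat.le_add_right _ _))
  exact hload ▸ volumeStartedBefore_sub_le hw H (u * H)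

end Blocks

theorem packing_schedulable_large_H_general
    (K P T H : ℕ)
    (hH : 3 * P ≤ H)
    (pi : ℕ → ℕ → ℕ)
    (hvol : ∑ k ∈ Finset.Icc 1 K, ∑ p ∈ Finset.Icc 1 P, p * pi p k ≤ T * H) :
    ∃ y : ℕ → ℕ → ℕ → ℕ,
      (∀ p ∈ Finset.Icc 1 P, ∀ k ∈ Finset.Icc 1 K,
        ∑ t ∈ Finset.Icc 1 T, y p k t = pi p k) ∧
      (∀ t ∈ Finset.Icc 1 T,
        3 * (∑ k ∈ Finset.Icc 1 K, ∑ p ∈ Finset.Icc 1 P, p * y p k t) ≤ 4 * H) := by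
  let s : Finset (ℕ ×ₗ ℕ) := (Icc 1 K ×ˢ Icc 1 P).map toLex.toEmbedding
  let w : ℕ ×ₗ ℕ → ℕ := fun i => (ofLex i).2
  let n : ℕ ×ₗ ℕ → ℕ := fun i => pi (ofLex i).2 (ofLex i).1
  have sum_s (f : ℕ ×ₗ ℕ → ℕ) :
      ∑ i ∈ s, f i = ∑ k ∈ Icc 1 K, ∑ p ∈ Icc 1 P, f (toLex (k, p)) := by
    rw [sum_map, sum_product]; rfl
  have hw : ∀ i ∈ s, w i ≤ P := by
    simp only [s, w, mem_map, mem_product, mem_Icc]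
    rintro _ ⟨_, ⟨-, -, hp⟩, rfl⟩
    exact hp
  refine ⟨fun p k t => periodCount w n s H (toLex (k, p)) t, ?_, fun t ht => ?_⟩
  · intro p hp k hk
    exact sum_periodCount (mem_map_of_mem _ (mem_product.mpr ⟨hk, hp⟩)) (mem_Icc.mp hp).1
      ((sum_s _).trans_le hvol)
  · have hload :
        ∑ k ∈ Icc 1 K, ∑ p ∈ Icc 1 P, p * periodCount w n s H (toLex (k, p)) t ≤ H + P :=
      (sum_s _).symm.trans_le (sum_periodCount_mul_le hw H (mem_Icc.mp ht).1)
    beta_reduce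
    omega

/-- If `3P ≤ H` and packing `π` has volume at most `T * H`, then `π` can be
scheduled into `T` periods with every period load at most `4H/3`. -/
theorem packing_schedulable_large_H
    (K P T H : ℕ) (hK : 1 ≤ K) (hP : 1 ≤ P) (hT : 1 ≤ T)
    (hH : 3 * P ≤ H)
    (pi : ℕ → ℕ → ℕ)
    (hvol : ∑ k ∈ Finset.Icc 1 K, ∑ p ∈ Finset.Icc 1 P, p * pi p k ≤ T * H) :
    ∃ y : ℕ → ℕ → ℕ → ℕ,
      (∀ p ∈ Finset.Icc 1 P, ∀ k ∈ Finset.Icc 1 K,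
        ∑ t ∈ Finset.Icc 1 T, y p k t = pi p k) ∧
      (∀ t ∈ Finset.Icc 1 T,
        3 * (∑ k ∈ Finset.Icc 1 K, ∑ p ∈ Finset.Icc 1 P, p * y p k t) ≤ 4 * H) :=
  packing_schedulable_large_H_general K P T H hH pi hvol
end

section
/- Let T ≥ 1 and λ ≥ 1 be integers, let I be a finite set of items with sizes s_i ∈ ℕ satisfying s_i ≤ λ for every i ∈ I, suppose ∑_{i ∈ I} s_i ≤ T · λ, and suppose the scale condition 2 · |{i ∈ I : 3·s_i > 2λ}| + |{i ∈ I : λ < 3·s_i ≤ 2λ}| ≤ 2T holds. Then there exists an assignment f : I → {1,…,T} of the items to T boxes such that for every box t ∈ {1,…,T}, 3 · ∑_{i : f(i) = t} s_i ≤ 4λ. -/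
/-!
Big items (`3s > 2L`) go one per box into boxes `1, …, b`, medium items (`L < 3s ≤ 2L`) two per
box into the following boxes; the scale condition `2b + m ≤ 2T` says exactly that this fits into
`T` boxes, and every box so far has load at most `4L/3`. Small items (`3s ≤ L`) are then added
greedily: as the total volume is at most `T L`, some box always has load at most `L`, and a small
item placed there keeps it at most `4L/3`.
-/

open Finset

namespace Finset

variable {α β : Type*}

theorem exists_card_filter_le_of_card_le_mul (A : Finset α) {c n : ℕ} (h : #A ≤ c * n) :
    ∃ g : α → ℕ, (∀ i ∈ A, g i < n) ∧ ∀ t, #{i ∈ A | g i = t} ≤ c := by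
  classical
  rcases c.eq_zero_or_pos with rfl | hc
  · obtain rfl : A = ∅ := by simpa using h
    exact ⟨fun _ => 0, by simp, by simp⟩
  let e : α → ℕ := fun i => if hi : i ∈ A then A.equivFin ⟨i, hi⟩ else 0
  have he_lt : ∀ i ∈ A, e i < #A := fun i hi => by simp [e, hi]
  have he_inj : Set.InjOn e A := fun i hi j hj hij => by
    simpa [e, mem_coe.1 hi, mem_coe.1 hj, Fin.val_inj] using hij
  refine ⟨fun i => e i / c, fun i hi => Nat.div_lt_of_lt_mul ((he_lt i hi).trans_le h),
    fun t => ?_⟩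
  calc #{i ∈ A | e i / c = t} ≤ #(Ico (t * c) (t * c + c)) := by
        refine card_le_card_of_injOn e (fun i hi => ?_) (he_inj.mono (filter_subset _ _))
        have := ((Nat.div_eq_iff hc).1 (mem_filter.1 hi).2)
        simp only [coe_Ico, Set.mem_Ico]
        omega
    _ = c := by simp

variable [DecidableEq α] [DecidableEq β] (s : α → ℕ)

theorem sum_insert_filter_update_eq {P : Finset α} {a : α} (ha : a ∉ P) (f : α → β) (t₀ t : β) :
    ∑ i ∈ insert a P with Function.update f a t₀ i = t, s i =
      (if t₀ = t then s a else 0) + ∑ i ∈ P with f i = t, s i := by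
  rw [sum_filter, sum_insert ha, sum_filter, Function.update_self]
  congr 1
  refine sum_congr rfl fun i hi => ?_
  rw [Function.update_of_ne (ne_of_mem_of_not_mem hi ha)]

theorem exists_extend_assignment {B : Finset β} (hB : B.Nonempty) {L δ : ℕ} {S : Finset α}
    (hS : ∀ i ∈ S, s i ≤ δ) (P : Finset α) (f₀ : α → β) (hPS : Disjoint P S)
    (hf₀ : ∀ i ∈ P, f₀ i ∈ B) (hload : ∀ t ∈ B, ∑ i ∈ P with f₀ i = t, s i ≤ L + δ)
    (hvol : ∑ i ∈ P ∪ S, s i ≤ #B * L) :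
    ∃ f : α → β, (∀ i ∈ P ∪ S, f i ∈ B) ∧ ∀ t ∈ B, ∑ i ∈ P ∪ S with f i = t, s i ≤ L + δ := by
  induction S using Finset.induction_on generalizing P f₀ with
  | empty => exact ⟨f₀, by simpa using hf₀, by simpa using hload⟩
  | @insert a S ha ih =>
    obtain ⟨t₀, ht₀, hlight⟩ : ∃ t ∈ B, ∑ i ∈ P with f₀ i = t, s i ≤ L := by
      refine exists_le_of_sum_le hB ?_
      calc ∑ t ∈ B, ∑ i ∈ P with f₀ i = t, s i = ∑ i ∈ P, s i := sum_fiberwise_of_maps_to hf₀ s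
        _ ≤ ∑ i ∈ P ∪ insert a S, s i := sum_le_sum_of_subset subset_union_left
        _ ≤ ∑ _t ∈ B, L := by simpa using hvol
    have haP : a ∉ P := fun h => disjoint_left.1 hPS h (mem_insert_self a S)
    have hunion : insert a P ∪ S = P ∪ insert a S := by rw [insert_union, union_insert]
    rw [← hunion] at hvol ⊢
    refine ih (fun i hi => hS i (mem_insert_of_mem hi)) (insert a P) (Function.update f₀ a t₀)
      ?_ ?_ ?_ hvol
    · exact disjoint_insert_left.2 ⟨ha, hPS.mono_right (subset_insert a S)⟩
    · intro i hi
      rcases mem_insert.1 hi with rfl | hi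
      · simpa using ht₀
      · simpa [Function.update_of_ne (ne_of_mem_of_not_mem hi haP)] using hf₀ i hi
    · intro t ht
      have hsa := hS a (mem_insert_self a S)
      rw [sum_insert_filter_update_eq s haP]
      split_ifs with h
      · subst h; omega
      · simpa using hload t ht

end Finset

theorem exists_assignment_large_items {ι : Type*} [Fintype ι] {T L : ℕ} {s : ι → ℕ}
    (hmax : ∀ i, s i ≤ L)
    (hscale : 2 * #{i | 2 * L < 3 * s i} + #{i | L < 3 * s i ∧ 3 * s i ≤ 2 * L} ≤ 2 * T) :
    ∃ f : ι → ℕ, (∀ i ∈ ({i | L < 3 * s i} : Finset ι), f i ∈ Icc 1 T) ∧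
      ∀ t, ∑ i ∈ ({i | L < 3 * s i} : Finset ι) with f i = t, 3 * s i ≤ 4 * L := by
  classical
  set B : Finset ι := {i | 2 * L < 3 * s i}
  set M : Finset ι := {i | L < 3 * s i ∧ 3 * s i ≤ 2 * L}
  obtain ⟨gB, hgB_lt, hgB_card⟩ := B.exists_card_filter_le_of_card_le_mul (c := 1) (n := #B)
    (by simp)
  obtain ⟨gM, hgM_lt, hgM_card⟩ := M.exists_card_filter_le_of_card_le_mul (c := 2)
    (n := T - #B) (by omega)
  refine ⟨fun i => if 2 * L < 3 * s i then gB i + 1 else #B + gM i + 1, fun i hi => ?_,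
    fun t => ?_⟩
  · have := hgB_lt i
    have := hgM_lt i
    simp only [B, M, mem_filter, mem_univ, true_and, mem_Icc] at *
    split_ifs <;> omega
  by_cases ht : t ≤ #B
  · calc _ ≤ ∑ i ∈ B with gB i = t - 1, 3 * s i := by
          refine sum_le_sum_of_subset fun i hi => ?_
          have := hgM_lt i
          simp only [B, M, mem_filter, mem_univ, true_and] at *
          split_ifs at hi <;> omega
      _ ≤ #{i ∈ B | gB i = t - 1} • (3 * L) :=
          sum_le_card_nsmul _ _ _ fun i _ => by have := hmax i; omega
      _ ≤ 1 • (3 * L) := by gcongr; exact hgB_card _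
      _ ≤ 4 * L := by rw [smul_eq_mul]; omega
  · calc _ ≤ ∑ i ∈ M with gM i = t - #B - 1, 3 * s i := by
          refine sum_le_sum_of_subset fun i hi => ?_
          have := hgB_lt i
          simp only [B, M, mem_filter, mem_univ, true_and] at *
          split_ifs at hi <;> omega
      _ ≤ #{i ∈ M | gM i = t - #B - 1} • (2 * L) :=
          sum_le_card_nsmul _ _ _ fun i hi => by simp [M] at hi; omega
      _ ≤ 2 • (2 * L) := by gcongr; exact hgM_card _
      _ = 4 * L := by ring

theorem items_assignment_with_scale_general
    (T L : ℕ) (hT : 1 ≤ T)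
    (I : Type) [Fintype I] (s : I → ℕ)
    (hmax : ∀ i : I, s i ≤ L)
    (hvol : ∑ i : I, s i ≤ T * L)
    (hscale : 2 * (Finset.univ.filter (fun i : I => 2 * L < 3 * s i)).card
        + (Finset.univ.filter (fun i : I => L < 3 * s i ∧ 3 * s i ≤ 2 * L)).card
        ≤ 2 * T) :
    ∃ f : I → ℕ,
      (∀ i : I, f i ∈ Finset.Icc 1 T) ∧
      (∀ t ∈ Finset.Icc 1 T,
        3 * (∑ i ∈ Finset.univ.filter (fun i => f i = t), s i) ≤ 4 * L) := by
  classical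
  obtain ⟨f₀, hf₀_mem, hf₀_load⟩ := exists_assignment_large_items hmax hscale
  set P : Finset I := {i | L < 3 * s i}
  set S : Finset I := {i | 3 * s i ≤ L}
  have hcover : P ∪ S = univ := by
    ext i; simp only [P, S, mem_union, mem_filter, mem_univ, true_and, iff_true]; omega
  obtain ⟨f, hf_mem, hf_load⟩ := exists_extend_assignment (fun i => 3 * s i) (L := 3 * L)
    (δ := L) (S := S) (B := Icc 1 T) (nonempty_Icc.2 hT) (by simp [S]) P f₀
    (disjoint_filter.2 fun i _ _ => by omega) hf₀_mem (fun t _ => by linarith [hf₀_load t])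
    (by rw [hcover, ← mul_sum, Nat.card_Icc, Nat.add_sub_cancel]; linarith)
  refine ⟨f, fun i => hf_mem i (hcover ▸ mem_univ i), fun t ht => ?_⟩
  rw [mul_sum, ← hcover]
  linarith [hf_load t ht]

/-- Items of size at most `L`, of total size at most `T * L`, satisfying the
scale condition (number of big items plus half the number of medium items at most `T`),
can be assigned to `T` boxes so that every box load is at most `4L/3`. -/
theorem items_assignment_with_scale
    (T L : ℕ) (hT : 1 ≤ T) (hL : 1 ≤ L)
    (I : Type) [Fintype I] (s : I → ℕ)
    (hmax : ∀ i : I, s i ≤ L)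
    (hvol : ∑ i : I, s i ≤ T * L)
    (hscale : 2 * (Finset.univ.filter (fun i : I => 2 * L < 3 * s i)).card
        + (Finset.univ.filter (fun i : I => L < 3 * s i ∧ 3 * s i ≤ 2 * L)).card
        ≤ 2 * T) :
    ∃ f : I → ℕ,
      (∀ i : I, f i ∈ Finset.Icc 1 T) ∧
      (∀ t ∈ Finset.Icc 1 T,
        3 * (∑ i ∈ Finset.univ.filter (fun i => f i = t), s i) ≤ 4 * L) :=
  items_assignment_with_scale_general T L hT I s hmax hvol hscale
end

section
/- Let λ ≥ 1 be an integer and let π be a packing such that (i) vol(π) ≤ T · λ, (ii) π_{p,k} = 0 whenever p > λ, and (iii) the doubled λ-scale of π is at most 2T, i.e. 2·∑_{k=1}^K ∑_{p : 3p>2λ} π_{p,k} + ∑_{k=1}^K ∑_{p : λ<3p≤2λ} π_{p,k} ≤ 2T. Then there exists a schedule y such that ∑_{t=1}^T y_{p,k,t} = π_{p,k} for all p ∈ {1,…,P} and k ∈ {1,…,K} (so y is feasible whenever π satisfies all demands), and the load of y at every period t satisfies 3 · H_t ≤ 4λ. -/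
/-!
The periods are filled one at a time. A period first receives a seed of doubled scale
`min 2 s`, where `s` is the doubled scale still to be scheduled: one big configuration, or at
most two medium ones. Big configurations have size at most `L` and medium ones at most `2L/3`,
so the seed has load at most `4L/3`. Small configurations (size at most `L/3`) are then added
greedily until the load reaches `L`, overshooting by less than `L/3`. Hence every period either
carries load at least `L`, so the remaining volume stays at most `L` times the number of remaining
periods, or takes all remaining small configurations; and the doubled scale drops by `2` per
period. After `T` periods nothing is left.
-/

open Finset

namespace Multiset

variable {ι : Type*}

theorem sum_map_eq_sum_count_mul [DecidableEq ι] {s : Finset ι} {n : Multiset ι}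
    (hn : ∀ i ∈ n, i ∈ s) (f : ι → ℕ) :
    (n.map f).sum = ∑ i ∈ s, n.count i * f i := by
  rw [Finset.sum_multiset_map_count]
  exact Finset.sum_subset (fun i hi => hn i (mem_toFinset.mp hi))
    (fun i _ hi => by simp [count_eq_zero.mpr (mt mem_toFinset.mpr hi)])

theorem sum_map_eq_sum_map_tsub_add [DecidableEq ι] {m θ : Multiset ι} (h : θ ≤ m)
    (f : ι → ℕ) :
    (m.map f).sum = ((m - θ).map f).sum + (θ.map f).sum := by
  rw [← sum_add, ← map_add, tsub_add_cancel_of_le h]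

theorem exists_le_sum_map_eq_min_two {f : ι → ℕ} {m : Multiset ι}
    (hf : ∀ i ∈ m, f i ≤ 2) :
    ∃ σ ≤ m, (∀ i ∈ σ, f i ≠ 0) ∧ (σ.map f).sum = min 2 (m.map f).sum := by
  induction m using Multiset.induction_on with
  | empty => exact ⟨0, le_rfl, by simp, by simp⟩
  | cons i m ih =>
    obtain ⟨σ, hσm, hσ, hσsum⟩ := ih fun j hj => hf j (mem_cons_of_mem hj)
    have hσm' : σ ≤ i ::ₘ m := hσm.trans (le_cons_self m i)
    have hi := hf i (mem_cons_self i m)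
    simp only [map_cons, sum_cons]
    obtain hi0 | hi1 | hi2 : f i = 0 ∨ f i = 1 ∨ f i = 2 := by omega
    · exact ⟨σ, hσm', hσ, by omega⟩
    · by_cases htwo : (σ.map f).sum = 2
      · exact ⟨σ, hσm', hσ, by omega⟩
      · refine ⟨i ::ₘ σ, cons_le_cons i hσm, ?_, ?_⟩
        · simpa [forall_mem_cons, hi1] using hσ
        · simp only [map_cons, sum_cons]; omega
    · exact ⟨{i}, singleton_le.mpr (mem_cons_self i m), by simp [hi2], by simp [hi2]⟩

theorem exists_le_fill {w : ι → ℕ} {r : Multiset ι} {b L c : ℕ}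
    (hr : ∀ i ∈ r, w i ≤ c) (hb : b ≤ L + c) :
    ∃ τ ≤ r, b + (τ.map w).sum ≤ L + c ∧ (τ = r ∨ L ≤ b + (τ.map w).sum) := by
  induction r using Multiset.induction_on with
  | empty => exact ⟨0, le_rfl, by simpa using hb, Or.inl rfl⟩
  | cons i r ih =>
    obtain ⟨τ, hτr, hτ, hfull⟩ := ih fun j hj => hr j (mem_cons_of_mem hj)
    by_cases hL : L ≤ b + (τ.map w).sum
    · exact ⟨τ, hτr.trans (le_cons_self r i), hτ, Or.inr hL⟩
    · obtain rfl := hfull.resolve_right hL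
      have hi := hr i (mem_cons_self i τ)
      refine ⟨i ::ₘ τ, le_rfl, ?_, Or.inl rfl⟩
      simp only [map_cons, sum_cons]
      omega

end Multiset

namespace MultiBot

def doubledScale (L x : ℕ) : ℕ := if 2 * L < 3 * x then 2 else if L < 3 * x then 1 else 0

theorem doubledScale_le_two (L x : ℕ) : doubledScale L x ≤ 2 := by
  unfold doubledScale; split_ifs <;> omega

theorem doubledScale_ne_zero_iff {L x : ℕ} : doubledScale L x ≠ 0 ↔ L < 3 * x := by
  unfold doubledScale; split_ifs <;> omega

theorem three_mul_le_two_mul_doubledScale {L x : ℕ} (hx : x ≤ L) (hL : L < 3 * x) :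
    3 * x ≤ 2 * L * doubledScale L x := by
  unfold doubledScale; split_ifs <;> omega

section Schedule

variable {ι : Type*} {w : ι → ℕ} {L : ℕ}

theorem three_mul_sum_map_le_doubledScale {σ : Multiset ι} (hmax : ∀ i ∈ σ, w i ≤ L)
    (hσ : ∀ i ∈ σ, L < 3 * w i) :
    3 * (σ.map w).sum ≤ 2 * L * (σ.map (doubledScale L ∘ w)).sum := by
  rw [← Multiset.sum_map_mul_left, ← Multiset.sum_map_mul_left]
  exact Multiset.sum_map_le_sum_map _ _ fun i hi =>
    three_mul_le_two_mul_doubledScale (hmax i hi) (hσ i hi)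

theorem exists_period [DecidableEq ι] {m : Multiset ι} {T : ℕ} (hmax : ∀ i ∈ m, w i ≤ L)
    (hscale : (m.map (doubledScale L ∘ w)).sum ≤ 2 * (T + 1))
    (hvol : (m.map w).sum ≤ (T + 1) * L ∨ ∀ i ∈ m, L < 3 * w i) :
    ∃ θ ≤ m, 3 * (θ.map w).sum ≤ 4 * L ∧
      ((m - θ).map (doubledScale L ∘ w)).sum ≤ 2 * T ∧
      (((m - θ).map w).sum ≤ T * L ∨ ∀ i ∈ m - θ, L < 3 * w i) := by
  obtain ⟨σ, hσm, hσ, hσscale⟩ := Multiset.exists_le_sum_map_eq_min_two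
    (f := doubledScale L ∘ w) (m := m) fun _ _ => doubledScale_le_two _ _
  replace hσ : ∀ i ∈ σ, L < 3 * w i := fun i hi => doubledScale_ne_zero_iff.mp (hσ i hi)
  have hσload : 3 * (σ.map w).sum ≤ 4 * L :=
    calc 3 * (σ.map w).sum
        ≤ 2 * L * min 2 (m.map (doubledScale L ∘ w)).sum := hσscale ▸
          three_mul_sum_map_le_doubledScale (fun i hi => hmax i (Multiset.mem_of_le hσm hi)) hσ
      _ ≤ 2 * L * 2 := Nat.mul_le_mul_left _ (min_le_left _ _)
      _ = 4 * L := by ring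
  set r := (m - σ).filter fun i => 3 * w i ≤ L
  obtain ⟨τ, hτr, hτload, hτ⟩ := Multiset.exists_le_fill (w := w) (r := r) (c := L / 3)
    (b := (σ.map w).sum) (L := L) (fun i hi => by have := (Multiset.mem_filter.mp hi).2; omega)
    (by omega)
  have hτm : τ ≤ m - σ := hτr.trans (Multiset.filter_le _ _)
  have hθm : σ + τ ≤ m := by
    rw [add_comm]; exact (le_tsub_iff_right hσm).mp hτm
  have hscale_split := Multiset.sum_map_eq_sum_map_tsub_add hθm (doubledScale L ∘ w)
  have hvol_split := Multiset.sum_map_eq_sum_map_tsub_add hθm w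
  simp only [Multiset.map_add, Multiset.sum_add] at hscale_split hvol_split
  refine ⟨σ + τ, hθm, ?_, by omega, ?_⟩
  · simp only [Multiset.map_add, Multiset.sum_add]; omega
  rcases hτ with rfl | hfull
  · right
    intro i hi
    rw [tsub_add_eq_tsub_tsub, ← Multiset.filter_add_not (fun i => 3 * w i ≤ L) (m - σ),
      add_tsub_cancel_left] at hi
    simpa using (Multiset.mem_filter.mp hi).2
  · exact hvol.imp (fun h => by rw [add_one_mul] at h; omega)
      fun h i hi => h i (Multiset.mem_of_le tsub_le_self hi)

theorem exists_schedule [DecidableEq ι] {T : ℕ} {m : Multiset ι} (hpos : ∀ i ∈ m, 0 < w i)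
    (hmax : ∀ i ∈ m, w i ≤ L) (hscale : (m.map (doubledScale L ∘ w)).sum ≤ 2 * T)
    (hvol : (m.map w).sum ≤ T * L ∨ ∀ i ∈ m, L < 3 * w i) :
    ∃ b : ℕ → Multiset ι, ∑ t ∈ Icc 1 T, b t = m ∧
      ∀ t ∈ Icc 1 T, 3 * ((b t).map w).sum ≤ 4 * L := by
  induction T generalizing m with
  | zero =>
    refine ⟨fun _ => 0, ?_, by simp⟩
    suffices ∀ i, i ∉ m by simpa using (Multiset.eq_zero_of_forall_notMem this).symm
    intro i hi
    have hsmall : ¬ L < 3 * w i := fun h => doubledScale_ne_zero_iff.mpr h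
      (by simpa using Multiset.le_sum_of_mem (Multiset.mem_map_of_mem (doubledScale L ∘ w) hi)
        |>.trans hscale)
    rcases hvol with h | h
    · have := Multiset.le_sum_of_mem (Multiset.mem_map_of_mem w hi)
      have := hpos i hi
      omega
    · exact hsmall (h i hi)
  | succ T ih =>
    obtain ⟨θ, hθm, hθ, hscale', hvol'⟩ := exists_period hmax hscale hvol
    have hsub : ∀ i ∈ m - θ, i ∈ m := fun i hi => Multiset.mem_of_le tsub_le_self hi
    obtain ⟨b, hb, hbload⟩ := ih (fun i hi => hpos i (hsub i hi))
      (fun i hi => hmax i (hsub i hi)) hscale' hvol'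
    refine ⟨Function.update b (T + 1) θ, ?_, fun t ht => ?_⟩
    · have hbefore : ∑ t ∈ Icc 1 T, Function.update b (T + 1) θ t = ∑ t ∈ Icc 1 T, b t :=
        Finset.sum_congr rfl fun t ht => Function.update_of_ne (by simp at ht; omega) _ _
      rw [Finset.sum_Icc_succ_top (by omega), Function.update_self, hbefore, hb,
        tsub_add_cancel_of_le hθm]
    · rcases eq_or_ne t (T + 1) with rfl | ht'
      · simpa using hθ
      · rw [Function.update_of_ne ht']
        exact hbload t (by simp at ht ⊢; omega)

end Schedule

theorem sum_mul_doubledScale (L : ℕ) (g : ℕ → ℕ) (t : Finset ℕ) :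
    ∑ p ∈ t, g p * doubledScale L p =
      2 * ∑ p ∈ t.filter (fun p => 2 * L < 3 * p), g p
        + ∑ p ∈ t.filter (fun p => L < 3 * p ∧ 3 * p ≤ 2 * L), g p := by
  rw [sum_filter, sum_filter, mul_sum, ← sum_add_distrib]
  refine sum_congr rfl fun p _ => ?_
  unfold doubledScale
  split_ifs <;> omega

section Packing

variable (K P : ℕ) (pi : ℕ → ℕ → ℕ)

/-- The packing `pi` as a bag of items `(k, p)`: `pi p k` copies of configuration `p` of job
type `k`. -/
def packingMultiset : Multiset (ℕ × ℕ) := ∑ i ∈ Icc 1 K ×ˢ Icc 1 P, pi i.2 i.1 • {i}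

variable {K P pi}

theorem count_packingMultiset (i : ℕ × ℕ) :
    (packingMultiset K P pi).count i = if i ∈ Icc 1 K ×ˢ Icc 1 P then pi i.2 i.1 else 0 := by
  simp [packingMultiset, Multiset.count_sum', Multiset.count_singleton]

theorem mem_packingMultiset {i : ℕ × ℕ} :
    i ∈ packingMultiset K P pi ↔ i ∈ Icc 1 K ×ˢ Icc 1 P ∧ pi i.2 i.1 ≠ 0 := by
  rw [← Multiset.count_ne_zero, count_packingMultiset]
  split_ifs <;> simp_all

theorem sum_map_eq_sum_sum_count_mul {n : Multiset (ℕ × ℕ)} (hn : n ≤ packingMultiset K P pi)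
    (f : ℕ × ℕ → ℕ) :
    (n.map f).sum = ∑ k ∈ Icc 1 K, ∑ p ∈ Icc 1 P, n.count (k, p) * f (k, p) := by
  rw [Multiset.sum_map_eq_sum_count_mul
    (fun i hi => (mem_packingMultiset.mp (Multiset.mem_of_le hn hi)).1), sum_product]

theorem sum_map_packingMultiset (f : ℕ × ℕ → ℕ) :
    ((packingMultiset K P pi).map f).sum =
      ∑ k ∈ Icc 1 K, ∑ p ∈ Icc 1 P, pi p k * f (k, p) := by
  rw [sum_map_eq_sum_sum_count_mul le_rfl]
  refine sum_congr rfl fun k hk => sum_congr rfl fun p hp => ?_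
  rw [count_packingMultiset, if_pos (mem_product.mpr ⟨hk, hp⟩)]

end Packing

end MultiBot

open MultiBot

theorem packing_schedulable_small_H_general
    (K P T L : ℕ)
    (pi : ℕ → ℕ → ℕ)
    (hvol : ∑ k ∈ Finset.Icc 1 K, ∑ p ∈ Finset.Icc 1 P, p * pi p k ≤ T * L)
    (hmax : ∀ p ∈ Finset.Icc 1 P, ∀ k ∈ Finset.Icc 1 K, L < p → pi p k = 0)
    (hscale : 2 * (∑ k ∈ Finset.Icc 1 K,
          ∑ p ∈ (Finset.Icc 1 P).filter (fun p => 2 * L < 3 * p), pi p k)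
        + (∑ k ∈ Finset.Icc 1 K,
          ∑ p ∈ (Finset.Icc 1 P).filter (fun p => L < 3 * p ∧ 3 * p ≤ 2 * L), pi p k)
        ≤ 2 * T) :
    ∃ y : ℕ → ℕ → ℕ → ℕ,
      (∀ p ∈ Finset.Icc 1 P, ∀ k ∈ Finset.Icc 1 K,
        ∑ t ∈ Finset.Icc 1 T, y p k t = pi p k) ∧
      (∀ t ∈ Finset.Icc 1 T,
        3 * (∑ k ∈ Finset.Icc 1 K, ∑ p ∈ Finset.Icc 1 P, p * y p k t) ≤ 4 * L) := by
  have hmem : ∀ i ∈ packingMultiset K P pi,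
      i.1 ∈ Icc 1 K ∧ i.2 ∈ Icc 1 P ∧ pi i.2 i.1 ≠ 0 :=
    fun i hi => by simpa only [mem_product, and_assoc] using mem_packingMultiset.mp hi
  obtain ⟨b, hb, hload⟩ := exists_schedule (w := Prod.snd) (L := L) (T := T)
    (fun i hi => (mem_Icc.mp (hmem i hi).2.1).1)
    (fun i hi => not_lt.mp fun hbig =>
      (hmem i hi).2.2 (hmax _ (hmem i hi).2.1 _ (hmem i hi).1 hbig))
    (by simpa only [sum_map_packingMultiset, Function.comp_apply, sum_mul_doubledScale,
      sum_add_distrib, ← mul_sum] using hscale)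
    (Or.inl (by simpa only [sum_map_packingMultiset, mul_comm] using hvol))
  have hbm : ∀ t ∈ Icc 1 T, b t ≤ packingMultiset K P pi :=
    fun t ht => hb ▸ single_le_sum (fun _ _ => Multiset.zero_le _) ht
  refine ⟨fun p k t => (b t).count (k, p), fun p hp k hk => ?_, fun t ht => ?_⟩
  · rw [← Multiset.count_sum', hb, count_packingMultiset, if_pos (mem_product.mpr ⟨hk, hp⟩)]
  · simpa only [sum_map_eq_sum_sum_count_mul (hbm t ht), mul_comm] using hload t ht

/-- A packing with volume at most `T * L`, with no configuration larger
than `L` and doubled `L`-scale at most `2T`, can be scheduled into `T` periods with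
every period load at most `4L/3`. -/
theorem packing_schedulable_small_H
    (K P T L : ℕ) (hK : 1 ≤ K) (hP : 1 ≤ P) (hT : 1 ≤ T) (hL : 1 ≤ L)
    (pi : ℕ → ℕ → ℕ)
    (hvol : ∑ k ∈ Finset.Icc 1 K, ∑ p ∈ Finset.Icc 1 P, p * pi p k ≤ T * L)
    (hmax : ∀ p ∈ Finset.Icc 1 P, ∀ k ∈ Finset.Icc 1 K, L < p → pi p k = 0)
    (hscale : 2 * (∑ k ∈ Finset.Icc 1 K,
          ∑ p ∈ (Finset.Icc 1 P).filter (fun p => 2 * L < 3 * p), pi p k)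
        + (∑ k ∈ Finset.Icc 1 K,
          ∑ p ∈ (Finset.Icc 1 P).filter (fun p => L < 3 * p ∧ 3 * p ≤ 2 * L), pi p k)
        ≤ 2 * T) :
    ∃ y : ℕ → ℕ → ℕ → ℕ,
      (∀ p ∈ Finset.Icc 1 P, ∀ k ∈ Finset.Icc 1 K,
        ∑ t ∈ Finset.Icc 1 T, y p k t = pi p k) ∧
      (∀ t ∈ Finset.Icc 1 T,
        3 * (∑ k ∈ Finset.Icc 1 K, ∑ p ∈ Finset.Icc 1 P, p * y p k t) ≤ 4 * L) :=
  packing_schedulable_small_H_general K P T L pi hvol hmax hscale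
end

section
/- Let π be a packing, let V = vol(π) = ∑_{k=1}^K ∑_{p=1}^P p · π_{p,k}, and assume V > 3·P·T with T ≥ 1. For each p ∈ {1,…,P} set α_p = ⌊V / (3pT)⌋. Then: (i) α_p ≥ 1 for every p ∈ {1,…,P}; (ii) 3T · p · α_p ≤ V for every p, and consequently if moreover V ≤ T · H for some integer H, then 3 · p · α_p ≤ H (every block of α_p many p-resources has size at most H/3); (iii) for every p ∈ {1,…,P} and k ∈ {1,…,K}, ⌊π_{p,k} / α_p⌋ ≤ 6T, and hence the total number of items created, ∑_{p=1}^P ∑_{k=1}^K (⌊π_{p,k}/α_p⌋ + 1), is at most P·K·(6T + 1); and (iv) the total size is preserved: ∑_{p=1}^P ∑_{k=1}^K ( p·α_p·⌊π_{p,k}/α_p⌋ + p·(π_{p,k} − α_p·⌊π_{p,k}/α_p⌋) ) = V. -/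
open Finset

-- With `α = n / (c m) ≥ 1` we get `n < (α + 1) c m ≤ 2 α c m`, hence `x < 2 m α`.
lemma Nat.div_div_lt_two_mul {n c m x : ℕ} (hcm : 0 < c * m) (hle : c * m ≤ n)
    (hx : c * x ≤ n) : x / (n / (c * m)) < 2 * m := by
  have hα : 1 ≤ n / (c * m) := (Nat.one_le_div_iff hcm).2 hle
  have hn : n < c * (2 * m * (n / (c * m))) := by
    have := Nat.lt_div_mul_add (a := n) hcm
    nlinarith
  have hxα : x < 2 * m * (n / (c * m)) := Nat.lt_of_mul_lt_mul_left (hx.trans_lt hn)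
  exact (Nat.div_lt_iff_lt_mul hα).2 hxα

lemma Nat.mul_mul_div_add_mul_sub (c a x : ℕ) :
    c * a * (x / a) + c * (x - a * (x / a)) = c * x := by
  rw [mul_assoc, ← Nat.mul_add, Nat.add_sub_cancel' (Nat.mul_div_le x a)]

lemma Finset.le_sum_sum_of_mem {ι κ : Type*} {s : Finset ι} {t : Finset κ} {f : ι → κ → ℕ}
    {i : ι} {j : κ} (hi : i ∈ s) (hj : j ∈ t) : f i j ≤ ∑ i ∈ s, ∑ j ∈ t, f i j :=
  (single_le_sum (fun _ _ => Nat.zero_le _) hj).trans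
    (single_le_sum (f := fun i => ∑ j ∈ t, f i j) (fun _ _ => Nat.zero_le _) hi)

theorem block_transformation_properties_general
    (K P T : ℕ) (hT : 1 ≤ T)
    (pi : ℕ → ℕ → ℕ) (V : ℕ)
    (hV : V = ∑ k ∈ Finset.Icc 1 K, ∑ p ∈ Finset.Icc 1 P, p * pi p k)
    (hbig : 3 * P * T < V) :
    (∀ p ∈ Finset.Icc 1 P, 1 ≤ V / (3 * p * T)) ∧
    (∀ p ∈ Finset.Icc 1 P,
      3 * T * (p * (V / (3 * p * T))) ≤ V ∧
      ∀ H : ℕ, V ≤ T * H → 3 * (p * (V / (3 * p * T))) ≤ H) ∧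
    ((∀ p ∈ Finset.Icc 1 P, ∀ k ∈ Finset.Icc 1 K,
        pi p k / (V / (3 * p * T)) ≤ 6 * T) ∧
      ∑ p ∈ Finset.Icc 1 P, ∑ k ∈ Finset.Icc 1 K,
          (pi p k / (V / (3 * p * T)) + 1) ≤ P * K * (6 * T + 1)) ∧
    (∑ p ∈ Finset.Icc 1 P, ∑ k ∈ Finset.Icc 1 K,
        (p * (V / (3 * p * T)) * (pi p k / (V / (3 * p * T)))
          + p * (pi p k - (V / (3 * p * T)) * (pi p k / (V / (3 * p * T)))))
      = V) := by
  have hpos : ∀ p ∈ Icc 1 P, 0 < p * (3 * T) := fun p hp =>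
    Nat.mul_pos (mem_Icc.1 hp).1 (by omega)
  have hle : ∀ p ∈ Icc 1 P, p * (3 * T) ≤ V := fun p hp => by
    nlinarith [(mem_Icc.1 hp).2]
  have hblock : ∀ p, 3 * T * (p * (V / (3 * p * T))) ≤ V := fun p => by
    have := Nat.div_mul_le_self V (3 * p * T)
    linarith
  have hblocks : ∀ p ∈ Icc 1 P, ∀ k ∈ Icc 1 K, pi p k / (V / (3 * p * T)) ≤ 6 * T :=
    fun p hp k hk => by
      have hterm : p * pi p k ≤ V := hV ▸ le_sum_sum_of_mem (f := fun k p => p * pi p k) hk hp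
      have := Nat.div_div_lt_two_mul (hpos p hp) (hle p hp) hterm
      rw [show p * (3 * T) = 3 * p * T by ring] at this
      omega
  refine ⟨fun p hp => ?_, fun p _ => ⟨hblock p, fun H hH => ?_⟩, ⟨hblocks, ?_⟩, ?_⟩
  · rw [show 3 * p * T = p * (3 * T) by ring]
    exact (Nat.one_le_div_iff (hpos p hp)).2 (hle p hp)
  · exact Nat.le_of_mul_le_mul_left (by linarith [hblock p]) hT
  · calc _ ≤ ∑ p ∈ Icc 1 P, ∑ k ∈ Icc 1 K, (6 * T + 1) :=
          sum_le_sum fun p hp => sum_le_sum fun k hk => Nat.add_le_add_right (hblocks p hp k hk) 1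
      _ = P * K * (6 * T + 1) := by simp [mul_assoc]
  · simp only [Nat.mul_mul_div_add_mul_sub]
    rw [hV, sum_comm]

/-- Lemma 2 of the paper: properties of the block transformation of a
packing of volume `V > 3PT`, with `α_p = ⌊V / (3pT)⌋`. -/
theorem block_transformation_properties
    (K P T : ℕ) (hK : 1 ≤ K) (hP : 1 ≤ P) (hT : 1 ≤ T)
    (pi : ℕ → ℕ → ℕ) (V : ℕ)
    (hV : V = ∑ k ∈ Finset.Icc 1 K, ∑ p ∈ Finset.Icc 1 P, p * pi p k)
    (hbig : 3 * P * T < V) :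
    (∀ p ∈ Finset.Icc 1 P, 1 ≤ V / (3 * p * T)) ∧
    (∀ p ∈ Finset.Icc 1 P,
      3 * T * (p * (V / (3 * p * T))) ≤ V ∧
      ∀ H : ℕ, V ≤ T * H → 3 * (p * (V / (3 * p * T))) ≤ H) ∧
    ((∀ p ∈ Finset.Icc 1 P, ∀ k ∈ Finset.Icc 1 K,
        pi p k / (V / (3 * p * T)) ≤ 6 * T) ∧
      ∑ p ∈ Finset.Icc 1 P, ∑ k ∈ Finset.Icc 1 K,
          (pi p k / (V / (3 * p * T)) + 1) ≤ P * K * (6 * T + 1)) ∧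
    (∑ p ∈ Finset.Icc 1 P, ∑ k ∈ Finset.Icc 1 K,
        (p * (V / (3 * p * T)) * (pi p k / (V / (3 * p * T)))
          + p * (pi p k - (V / (3 * p * T)) * (pi p k / (V / (3 * p * T)))))
      = V) :=
  block_transformation_properties_general K P T hT pi V hV hbig
end

section
/- (Single-period structure of minimum-volume packings.) Let p0 : {1,…,K} → {1,…,P} satisfy c_{p0(k),k} · p ≥ c_{p,k} · p0(k) for all p ∈ {1,…,P} and k ∈ {1,…,K}, and assume c_{p0(k),k} ≥ 1 for every k. Then there exists a packing π satisfying all demands such that (i) π has minimum volume among all demand-satisfying packings, i.e. vol(π) ≤ vol(ρ) for every packing ρ satisfying all demands, and (ii) for every k and every p ≠ p0(k), π_{p,k} ≤ p0(k); consequently, for every k, the volume of π used by non-optimal configurations for type k satisfies ∑_{p ≠ p0(k)} p · π_{p,k} ≤ p0(k) · P·(P+1)/2. -/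
/-!
The problem splits into one independent problem per job type. For a single type with optimal
configuration `q`, trading `w q` copies of a configuration `p ≠ q` for `w p` copies of `q`
keeps the volume (`w p * w q` on both sides) and does not lose capacity, since
`c p * w q ≤ c q * w p`. Among the minimum-volume packings, one using the fewest non-optimal
configurations therefore admits no such trade, i.e. uses fewer than `w q` copies of every `p ≠ q`.
-/

open Finset

section SingleType

variable {ι : Type*} [DecidableEq ι] {s : Finset ι}

theorem sum_mul_add_single (g z : ι → ℕ) (p : ι) (a : ℕ) :
    ∑ r ∈ s, g r * (z + Pi.single p a : ι → ℕ) r =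
      ∑ r ∈ s, g r * z r + if p ∈ s then g p * a else 0 := by
  rw [← sum_pi_single' p (g p * a) s]
  simp only [Pi.add_apply, mul_add, sum_add_distrib]
  congr 1
  refine sum_congr rfl fun r _ => ?_
  by_cases h : r = p
  · subst h; simp
  · simp [h]

theorem exists_exchange (w c : ι → ℕ) {p q : ι} (hp : p ∈ s) (hq : q ∈ s) (hpq : p ≠ q)
    (hopt : c p * w q ≤ c q * w p) {x : ι → ℕ} (hx : w q ≤ x p) :
    ∃ x' : ι → ℕ, ∑ r ∈ s, c r * x r ≤ ∑ r ∈ s, c r * x' r ∧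
      ∑ r ∈ s, w r * x' r = ∑ r ∈ s, w r * x r ∧
      ∑ r ∈ s.erase q, x' r + w q = ∑ r ∈ s.erase q, x r := by
  obtain ⟨z, rfl⟩ : ∃ z, x = z + (Pi.single p (w q) : ι → ℕ) := by
    refine ⟨Function.update x p (x p - w q), funext fun r => ?_⟩
    by_cases h : r = p
    · subst h
      simp only [Pi.add_apply, Function.update_self, Pi.single_eq_same]
      omega
    · simp [h]
  refine ⟨z + Pi.single q (w p), ?_, ?_, ?_⟩
  · simp only [sum_mul_add_single, if_pos hp, if_pos hq]
    omega
  · simp only [sum_mul_add_single, if_pos hp, if_pos hq, mul_comm (w q)]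
  · simp [sum_add_distrib, sum_pi_single', hp, hpq]

theorem exists_minimalFor_volume_forall_ne_lt (w c : ι → ℕ) (d : ℕ) {q : ι} (hq : q ∈ s)
    (hwq : 0 < w q) (hcq : 0 < c q) (hopt : ∀ p ∈ s, c p * w q ≤ c q * w p) :
    ∃ x : ι → ℕ,
      MinimalFor (fun y => d ≤ ∑ r ∈ s, c r * y r) (fun y => ∑ r ∈ s, w r * y r) x ∧
      ∀ p ∈ s, p ≠ q → x p < w q := by
  set Feasible : (ι → ℕ) → Prop := fun y => d ≤ ∑ r ∈ s, c r * y r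
  set vol : (ι → ℕ) → ℕ := fun y => ∑ r ∈ s, w r * y r
  have hfeasible : Feasible (Pi.single q d) := by
    simpa [Feasible, Pi.single_apply, hq] using Nat.le_mul_of_pos_left d hcq
  obtain ⟨x₀, hx₀⟩ := exists_minimalFor_of_wellFoundedLT Feasible vol ⟨_, hfeasible⟩
  obtain ⟨x, hx⟩ := exists_minimalFor_of_wellFoundedLT (MinimalFor Feasible vol)
    (fun y => ∑ r ∈ s.erase q, y r) ⟨x₀, hx₀⟩
  refine ⟨x, hx.prop, fun p hp hpq => Nat.lt_of_not_le fun hle => ?_⟩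
  obtain ⟨x', hcap, hvol, hfewer⟩ := exists_exchange w c hp hq hpq (hopt p hp) hle
  have hx' : MinimalFor Feasible vol x' :=
    ⟨hx.prop.prop.trans hcap, fun y hy _ => hvol.trans_le (hx.prop.le hy)⟩
  have := hx.le hx'
  omega

end SingleType

theorem sum_Icc_one_id (n : ℕ) : ∑ i ∈ Icc 1 n, i = n * (n + 1) / 2 := by
  have := sum_range_add_sum_Ico (fun i => i) (Nat.le_add_left 1 n)
  rw [sum_range_one, zero_add, sum_range_id, Nat.add_sub_cancel, mul_comm] at this
  rwa [← Ico_add_one_right_eq_Icc]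

theorem sum_filter_ne_mul_le (P q : ℕ) (x : ℕ → ℕ)
    (hx : ∀ p ∈ Icc 1 P, p ≠ q → x p ≤ q) :
    ∑ p ∈ (Icc 1 P).filter (fun p => p ≠ q), p * x p ≤ q * (P * (P + 1) / 2) :=
  calc ∑ p ∈ (Icc 1 P).filter (fun p => p ≠ q), p * x p
      ≤ ∑ p ∈ (Icc 1 P).filter (fun p => p ≠ q), p * q :=
        sum_le_sum fun p hp =>
          Nat.mul_le_mul_left p (hx p (mem_filter.mp hp).1 (mem_filter.mp hp).2)
    _ ≤ ∑ p ∈ Icc 1 P, p * q := sum_le_sum_of_subset (filter_subset _ _)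
    _ = q * (P * (P + 1) / 2) := by rw [← sum_mul, sum_Icc_one_id, mul_comm]

theorem single_period_optimal_packing_structure_general
    (K P : ℕ)
    (c : ℕ → ℕ → ℕ) (d : ℕ → ℕ)
    (p0 : ℕ → ℕ)
    (hp0mem : ∀ k ∈ Finset.Icc 1 K, p0 k ∈ Finset.Icc 1 P)
    (hp0opt : ∀ k ∈ Finset.Icc 1 K, ∀ p ∈ Finset.Icc 1 P,
      c p k * p0 k ≤ c (p0 k) k * p)
    (hpos : ∀ k ∈ Finset.Icc 1 K, 1 ≤ c (p0 k) k) :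
    ∃ pi : ℕ → ℕ → ℕ,
      (∀ k ∈ Finset.Icc 1 K, d k ≤ ∑ p ∈ Finset.Icc 1 P, c p k * pi p k) ∧
      (∀ rho : ℕ → ℕ → ℕ,
        (∀ k ∈ Finset.Icc 1 K, d k ≤ ∑ p ∈ Finset.Icc 1 P, c p k * rho p k) →
        ∑ k ∈ Finset.Icc 1 K, ∑ p ∈ Finset.Icc 1 P, p * pi p k
          ≤ ∑ k ∈ Finset.Icc 1 K, ∑ p ∈ Finset.Icc 1 P, p * rho p k) ∧
      (∀ k ∈ Finset.Icc 1 K, ∀ p ∈ Finset.Icc 1 P, p ≠ p0 k → pi p k ≤ p0 k) ∧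
      (∀ k ∈ Finset.Icc 1 K,
        ∑ p ∈ (Finset.Icc 1 P).filter (fun p => p ≠ p0 k), p * pi p k
          ≤ p0 k * (P * (P + 1) / 2)) := by
  have hsingle : ∀ k, ∃ x : ℕ → ℕ, k ∈ Icc 1 K →
      MinimalFor (fun y => d k ≤ ∑ p ∈ Icc 1 P, c p k * y p)
        (fun y => ∑ p ∈ Icc 1 P, p * y p) x ∧
      ∀ p ∈ Icc 1 P, p ≠ p0 k → x p < p0 k := by
    intro k
    by_cases hk : k ∈ Icc 1 K
    · obtain ⟨x, hx⟩ := exists_minimalFor_volume_forall_ne_lt (fun p => p) (c · k) (d k)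
        (hp0mem k hk) (mem_Icc.mp (hp0mem k hk)).1 (hpos k hk) (hp0opt k hk)
      exact ⟨x, fun _ => hx⟩
    · exact ⟨0, fun hk' => absurd hk' hk⟩
  choose x hx using hsingle
  have hbound : ∀ k ∈ Icc 1 K, ∀ p ∈ Icc 1 P, p ≠ p0 k → x k p ≤ p0 k :=
    fun k hk p hp hpq => ((hx k hk).2 p hp hpq).le
  exact ⟨fun p k => x k p, fun k hk => (hx k hk).1.prop,
    fun rho hrho => sum_le_sum fun k hk => (hx k hk).1.le (hrho k hk), hbound,
    fun k hk => sum_filter_ne_mul_le P (p0 k) (x k) (hbound k hk)⟩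

/-- there is a minimum-volume demand-satisfying packing which uses at most
`p0 k` many `p`-resources for each non-optimal configuration `p ≠ p0 k`, hence whose
volume on non-optimal configurations is at most `p0 k * P(P+1)/2` for each type `k`. -/
theorem single_period_optimal_packing_structure
    (K P : ℕ) (hK : 1 ≤ K) (hP : 1 ≤ P)
    (c : ℕ → ℕ → ℕ) (d : ℕ → ℕ)
    (p0 : ℕ → ℕ)
    (hp0mem : ∀ k ∈ Finset.Icc 1 K, p0 k ∈ Finset.Icc 1 P)
    (hp0opt : ∀ k ∈ Finset.Icc 1 K, ∀ p ∈ Finset.Icc 1 P,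
      c p k * p0 k ≤ c (p0 k) k * p)
    (hpos : ∀ k ∈ Finset.Icc 1 K, 1 ≤ c (p0 k) k) :
    ∃ pi : ℕ → ℕ → ℕ,
      (∀ k ∈ Finset.Icc 1 K, d k ≤ ∑ p ∈ Finset.Icc 1 P, c p k * pi p k) ∧
      (∀ rho : ℕ → ℕ → ℕ,
        (∀ k ∈ Finset.Icc 1 K, d k ≤ ∑ p ∈ Finset.Icc 1 P, c p k * rho p k) →
        ∑ k ∈ Finset.Icc 1 K, ∑ p ∈ Finset.Icc 1 P, p * pi p k
          ≤ ∑ k ∈ Finset.Icc 1 K, ∑ p ∈ Finset.Icc 1 P, p * rho p k) ∧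
      (∀ k ∈ Finset.Icc 1 K, ∀ p ∈ Finset.Icc 1 P, p ≠ p0 k → pi p k ≤ p0 k) ∧
      (∀ k ∈ Finset.Icc 1 K,
        ∑ p ∈ (Finset.Icc 1 P).filter (fun p => p ≠ p0 k), p * pi p k
          ≤ p0 k * (P * (P + 1) / 2)) :=
  single_period_optimal_packing_structure_general K P c d p0 hp0mem hp0opt hpos
end
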